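/- arXiv:1303.3857 — 2 statements merged into one kernel-verified Lean document; each statement's English description precedes it below -/
import Mathlib

section
/- Every permutation (of any [n]) that has no key mid-123 entry has no mid-123 entry at all; that is, it avoids the pattern 123. Equivalently, every permutation containing a 123 pattern has a key mid-123 entry. -/
/-- `π` contains the pattern 123: indices `i < j < k` with `π i < π j < π k`. -/
def Contains123 {n : ℕ} (π : Equiv.Perm (Fin n)) : Prop :=
  ∃ i j k : Fin n, i < j ∧ j < k ∧ π i < π j ∧ π j < π k

/-- `π j` is a mid-123 entry: it serves as the "2" of a 123 pattern. -/
def IsMid123 {n : ℕ} (π : Equiv.Perm (Fin n)) (j : Fin n) : Prop :=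
  ∃ i k : Fin n, i < j ∧ j < k ∧ π i < π j ∧ π j < π k

/-- `π m` is a right-to-left maximum: it exceeds every entry to its right. -/
def IsRLMax {n : ℕ} (π : Equiv.Perm (Fin n)) (m : Fin n) : Prop :=
  ∀ m' : Fin n, m < m' → π m' < π m

/-- `π j` is a key mid-123 entry: a mid-123 entry whose immediate predecessor either is
smaller than `π j` or is a right-to-left maximum. -/
def IsKeyMid123 {n : ℕ} (π : Equiv.Perm (Fin n)) (j : Fin n) : Prop :=
  IsMid123 π j ∧ ∃ j' : Fin n, (j' : ℕ) + 1 = (j : ℕ) ∧ (π j' < π j ∨ IsRLMax π j')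


/-!
Take the leftmost mid-123 entry `π j`; it has a predecessor `π j'`. If `π j` is not key,
then `π j < π j'` and some entry right of `j'` exceeds `π j'`, while the `1` of the
pattern through `π j` lies left of `j'`; so `π j'` is itself a mid-123 entry, contradicting
the choice of `j`.
-/

variable {n : ℕ} {π : Equiv.Perm (Fin n)}

lemma IsMid123.exists_succ_eq {j : Fin n} (hj : IsMid123 π j) :
    ∃ j' : Fin n, (j' : ℕ) + 1 = j := by
  obtain ⟨i, -, hij, -⟩ := hj
  exact ⟨⟨j - 1, by omega⟩, by simp only; omega⟩

lemma IsMid123.of_succ_eq {j j' : Fin n} (hj : IsMid123 π j) (hsucc : (j' : ℕ) + 1 = j)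
    (hlt : π j < π j') (hmax : ¬ IsRLMax π j') : IsMid123 π j' := by
  obtain ⟨i, -, hij, -, hi, -⟩ := hj
  obtain ⟨m, hj'm, hm⟩ : ∃ m, j' < m ∧ π j' ≤ π m := by
    simpa only [IsRLMax, not_forall, not_lt, exists_prop] using hmax
  have hij' : i < j' := by
    have hne : i ≠ j' := by rintro rfl; exact (hi.trans hlt).false
    rw [Fin.lt_def] at hij ⊢
    have := Fin.val_ne_of_ne hne
    omega
  exact ⟨i, m, hij', hj'm, hi.trans hlt, hm.lt_of_ne (π.injective.ne hj'm.ne)⟩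

lemma not_isMid123_of_forall_not_isKeyMid123 (h : ∀ j, ¬ IsKeyMid123 π j) (j : Fin n) :
    ¬ IsMid123 π j := by
  induction j using WellFoundedLT.induction with
  | _ j ih =>
    intro hj
    obtain ⟨j', hsucc⟩ := hj.exists_succ_eq
    have hj'j : j' < j := Fin.lt_def.mpr (by omega)
    have hlt : π j < π j' :=
      (not_lt.mp fun h' => h j ⟨hj, j', hsucc, .inl h'⟩).lt_of_ne (π.injective.ne hj'j.ne')
    exact ih j' hj'j (hj.of_succ_eq hsucc hlt fun hmax => h j ⟨hj, j', hsucc, .inr hmax⟩)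

theorem stmt2 {n : ℕ} (π : Equiv.Perm (Fin n))
    (h : ∀ j : Fin n, ¬ IsKeyMid123 π j) : ¬ Contains123 π := by
  rintro ⟨i, j, k, hij, hjk, hi, hk⟩
  exact not_isMid123_of_forall_not_isKeyMid123 h j ⟨i, k, hij, hjk, hi, hk⟩
end

section
/- Let π be a permutation of [n] avoiding both of the patterns 1243 and 2134, and suppose π(j) is the last mid-123 entry of π, i.e., π(j) is a mid-123 entry and π(j') is not a mid-123 entry for any j' > j. Then there is exactly one index l > j with π(l) > π(j); that is, the entry c such that (π(j), c) forms the '23' of a 123 pattern is unique. -/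
/-- `π` contains the pattern 1243: indices `i < j < k < l` with `π i < π j < π l < π k`. -/
def Contains1243 {n : ℕ} (π : Equiv.Perm (Fin n)) : Prop :=
  ∃ i j k l : Fin n, i < j ∧ j < k ∧ k < l ∧ π i < π j ∧ π j < π l ∧ π l < π k

/-- `π` contains the pattern 2134: indices `i < j < k < l` with `π j < π i < π k < π l`. -/
def Contains2134 {n : ℕ} (π : Equiv.Perm (Fin n)) : Prop :=
  ∃ i j k l : Fin n, i < j ∧ j < k ∧ k < l ∧ π j < π i ∧ π i < π k ∧ π k < π l

/-- `π` avoids both patterns 1243 and 2134. -/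
def AvoidsBoth {n : ℕ} (π : Equiv.Perm (Fin n)) : Prop :=
  ¬ Contains1243 π ∧ ¬ Contains2134 π

/-! If `π j` is the "2" of a 12 pattern, two later entries above `π j` must come in increasing
order, or together with that 12 they form a 1243; but then the first of them is itself a mid-123
entry, to the right of `π j`. -/

theorem lt_of_not_contains1243 {n : ℕ} {π : Equiv.Perm (Fin n)} (h : ¬ Contains1243 π)
    {i j l₁ l₂ : Fin n} (hij : i < j) (hπij : π i < π j) (hjl₁ : j < l₁) (hl₁l₂ : l₁ < l₂)
    (hπjl₂ : π j < π l₂) : π l₁ < π l₂ := by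
  refine (π.injective.ne hl₁l₂.ne).lt_of_le (not_lt.mp fun hgt => h ?_)
  exact ⟨i, j, l₁, l₂, hij, hjl₁, hl₁l₂, hπij, hπjl₂, hgt⟩

theorem isMid123_of_not_contains1243 {n : ℕ} {π : Equiv.Perm (Fin n)} (h : ¬ Contains1243 π)
    {i j l₁ l₂ : Fin n} (hij : i < j) (hπij : π i < π j) (hjl₁ : j < l₁) (hl₁l₂ : l₁ < l₂)
    (hπjl₁ : π j < π l₁) (hπjl₂ : π j < π l₂) : IsMid123 π l₁ :=
  ⟨j, l₂, hjl₁, hl₁l₂, hπjl₁, lt_of_not_contains1243 h hij hπij hjl₁ hl₁l₂ hπjl₂⟩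

theorem stmt3 {n : ℕ} (π : Equiv.Perm (Fin n)) (j : Fin n)
    (havoid : AvoidsBoth π) (hmid : IsMid123 π j)
    (hlast : ∀ j' : Fin n, j < j' → ¬ IsMid123 π j') :
    ∃! l : Fin n, j < l ∧ π j < π l := by
  obtain ⟨i, k, hij, hjk, hπij, hπjk⟩ := hmid
  refine ⟨k, ⟨hjk, hπjk⟩, fun l ⟨hjl, hπjl⟩ => ?_⟩
  by_contra hne
  rcases lt_or_gt_of_ne hne with hlk | hkl
  · exact hlast l hjl (isMid123_of_not_contains1243 havoid.1 hij hπij hjl hlk hπjl hπjk)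
  · exact hlast k hjk (isMid123_of_not_contains1243 havoid.1 hij hπij hjk hkl hπjk hπjl)
end
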